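/- arXiv:1912.05477 — 4 statements merged into one kernel-verified Lean document; each statement's English description precedes it below -/
import Mathlib

section
/- Let u : ℝⁿ → ℝ be 1-Lipschitz, let θ₀ be a unit vector, and suppose c ∈ ℝ satisfies r − u(rθ₀) ≤ c for all r ≥ 0, i.e. the half-line {(rθ₀, r − c) : r ≥ 0} in ℝⁿ × ℝ lies weakly below the graph of u. Then u(x) ≥ ⟨θ₀, x⟩ − c for all x ∈ ℝⁿ. -/
/-!
By the Lipschitz bound, `u x ≥ u (r • θ₀) - ‖x - r • θ₀‖ ≥ r - ‖x - r • θ₀‖ - c` for every `r ≥ 0`.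
Since `‖x - r • θ₀‖² = (r - ⟪θ₀, x⟫)² + ‖x‖² - ⟪θ₀, x⟫²`, the distance `‖x - r • θ₀‖` is
`r - ⟪θ₀, x⟫ + O(1/r)`, so letting `r → ∞` turns the left side into `⟪θ₀, x⟫ - c`.
-/

open Filter Topology RealInnerProductSpace

section UnitVector

variable {E : Type*} [NormedAddCommGroup E] [InnerProductSpace ℝ E] {θ : E}

theorem norm_sub_smul_sq_of_norm_eq_one (hθ : ‖θ‖ = 1) (x : E) (r : ℝ) :
    ‖x - r • θ‖ ^ 2 = (r - ⟪θ, x⟫) ^ 2 + (‖x‖ ^ 2 - ⟪θ, x⟫ ^ 2) := by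
  rw [norm_sub_sq_real, real_inner_smul_right, norm_smul, hθ, mul_one, Real.norm_eq_abs, sq_abs,
    real_inner_comm]
  ring

theorem sub_norm_sub_smul_le_inner (hθ : ‖θ‖ = 1) (x : E) (r : ℝ) :
    r - ‖x - r • θ‖ ≤ ⟪θ, x⟫ := by
  have hCS : ⟪θ, x⟫ ^ 2 ≤ ‖x‖ ^ 2 := by
    simpa [hθ] using sq_le_sq' (neg_le_of_abs_le (abs_real_inner_le_norm θ x))
      (le_of_abs_le (abs_real_inner_le_norm θ x))
  have hsq := norm_sub_smul_sq_of_norm_eq_one hθ x r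
  nlinarith [norm_nonneg (x - r • θ)]

/-- Lower bound from `√(a² + b) ≤ a + b / (2a)` with `a = r - ⟪θ, x⟫`. -/
theorem inner_sub_le_sub_norm_sub_smul (hθ : ‖θ‖ = 1) (x : E) {r : ℝ} (hr : ⟪θ, x⟫ < r) :
    ⟪θ, x⟫ - ‖x‖ ^ 2 / (2 * (r - ⟪θ, x⟫)) ≤ r - ‖x - r • θ‖ := by
  set a := r - ⟪θ, x⟫
  have ha : 0 < a := sub_pos.mpr hr
  set b := ‖x‖ ^ 2 / (2 * a)
  have hb : 0 ≤ b := by positivity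
  have hab : 2 * a * b = ‖x‖ ^ 2 := mul_div_cancel₀ _ (by positivity)
  have hsq : ‖x - r • θ‖ ^ 2 ≤ (a + b) ^ 2 := by
    rw [norm_sub_smul_sq_of_norm_eq_one hθ]
    nlinarith [sq_nonneg ⟪θ, x⟫]
  linarith [le_of_pow_le_pow_left₀ two_ne_zero (by positivity) hsq]

theorem tendsto_sub_norm_sub_smul_atTop (hθ : ‖θ‖ = 1) (x : E) :
    Tendsto (fun r : ℝ => r - ‖x - r • θ‖) atTop (𝓝 ⟪θ, x⟫) := by
  have hden : Tendsto (fun r : ℝ => 2 * (r - ⟪θ, x⟫)) atTop atTop :=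
    (tendsto_atTop_add_const_right _ _ tendsto_id).const_mul_atTop two_pos
  have hlower : Tendsto (fun r : ℝ => ⟪θ, x⟫ - ‖x‖ ^ 2 / (2 * (r - ⟪θ, x⟫))) atTop
      (𝓝 ⟪θ, x⟫) := by
    simpa using tendsto_const_nhds.sub (tendsto_const_nhds.div_atTop hden)
  exact tendsto_of_tendsto_of_tendsto_of_le_of_le' hlower tendsto_const_nhds
    ((eventually_gt_atTop ⟪θ, x⟫).mono fun r hr => inner_sub_le_sub_norm_sub_smul hθ x hr)
    (Eventually.of_forall (sub_norm_sub_smul_le_inner hθ x))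

end UnitVector

theorem stmt_8 (n : ℕ) (u : EuclideanSpace ℝ (Fin n) → ℝ)
    (hu : LipschitzWith 1 u)
    (θ₀ : EuclideanSpace ℝ (Fin n)) (hθ₀ : ‖θ₀‖ = 1) (c : ℝ)
    (h : ∀ r : ℝ, 0 ≤ r → r - u (r • θ₀) ≤ c) :
    ∀ x : EuclideanSpace ℝ (Fin n), u x ≥ (inner ℝ θ₀ x : ℝ) - c := by
  intro x
  have hbound : ∀ᶠ r in atTop, r - ‖x - r • θ₀‖ ≤ u x + c :=
    (eventually_ge_atTop 0).mono fun r hr => by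
      have hlip := hu.le_add_mul (r • θ₀) x
      rw [NNReal.coe_one, one_mul, dist_comm, dist_eq_norm] at hlip
      linarith [h r hr]
  have := le_of_tendsto (tendsto_sub_norm_sub_smul_atTop hθ₀ x) hbound
  linarith
end

section
/- Let Σ be the graph of a 1-Lipschitz function f : ℝⁿ → ℝ in Minkowski (n+1)-space, and suppose that for every point p ∈ Σ there exists a future-directed nonzero null vector v with p + v ∈ Σ (Σ is an entire past horizon). Then f is convex. -/
/-!
A horizon generator through `x` can be continued indefinitely: along a maximal segment on which
`f` grows at unit speed, the null vector supplied at its endpoint must continue the segment, since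
otherwise the strict triangle inequality would contradict `LipschitzWith 1 f`. So every `x` starts
a whole ray `t ↦ x + t • u`, `‖u‖ = 1`, with `f (x + t • u) = f x + t`. Comparing `f y` with the far
points of this ray, `f y ≥ f x + t - ‖t • u - (y - x)‖ → f x + ⟪u, y - x⟫`, so the affine function
`y ↦ f x + ⟪u, y - x⟫` supports `f` at `x`. A function supported by an affine minorant at every point
is convex.
-/

open Filter Topology
open scoped RealInnerProductSpace

theorem convexOn_of_forall_exists_linear_minorant {𝕜 E : Type*} [Field 𝕜] [LinearOrder 𝕜]
    [IsStrictOrderedRing 𝕜] [AddCommGroup E] [Module 𝕜 E] {s : Set E} {f : E → 𝕜}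
    (hs : Convex 𝕜 s) (h : ∀ x ∈ s, ∃ φ : E →ₗ[𝕜] 𝕜, ∀ y ∈ s, f x + φ (y - x) ≤ f y) :
    ConvexOn 𝕜 s f := by
  refine ⟨hs, fun p hp q hq a b ha hb hab => ?_⟩
  set z := a • p + b • q
  obtain ⟨φ, hφ⟩ := h z (hs hp hq ha hb hab)
  have hbalance : a * φ (p - z) + b * φ (q - z) = 0 := by
    have : a • (p - z) + b • (q - z) = 0 := by
      rw [smul_sub, smul_sub, ← add_sub_add_comm, ← add_smul, hab, one_smul, sub_self]
    simpa only [map_add, map_smul, smul_eq_mul, map_zero] using congrArg φ this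
  calc f z = a * (f z + φ (p - z)) + b * (f z + φ (q - z)) := by
          linear_combination (-f z) * hab - hbalance
    _ ≤ a * f p + b * f q := by
          gcongr
          exacts [hφ p hp, hφ q hq]
    _ = a • f p + b • f q := by simp only [smul_eq_mul]

theorem LipschitzWith.sub_le_norm_sub {E : Type*} [SeminormedAddCommGroup E] {f : E → ℝ}
    (hf : LipschitzWith 1 f) (a b : E) : f a - f b ≤ ‖a - b‖ := by
  simpa [Real.dist_eq, dist_eq_norm] using (le_abs_self _).trans (hf.dist_le_mul a b)

section Ray

variable {E : Type*} [NormedAddCommGroup E] [NormedSpace ℝ E] {f : E → ℝ} {x u : E}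

theorem norm_smul_of_norm_eq_one (hu : ‖u‖ = 1) {t : ℝ} (ht : 0 ≤ t) : ‖t • u‖ = t := by
  rw [norm_smul, hu, mul_one, Real.norm_of_nonneg ht]

theorem LipschitzWith.apply_add_smul_of_le (hf : LipschitzWith 1 f) (hu : ‖u‖ = 1) {s t : ℝ}
    (ht : f (x + t • u) = f x + t) (hs : 0 ≤ s) (hst : s ≤ t) : f (x + s • u) = f x + s := by
  have hlow := hf.sub_le_norm_sub (x + s • u) x
  have hhigh := hf.sub_le_norm_sub (x + t • u) (x + s • u)
  rw [add_sub_cancel_left, norm_smul_of_norm_eq_one hu hs] at hlow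
  rw [add_sub_add_left_eq_sub, ← sub_smul, norm_smul_of_norm_eq_one hu (sub_nonneg.2 hst),
    ht] at hhigh
  linarith

theorem LipschitzWith.apply_add_smul_extend [StrictConvexSpace ℝ E] (hf : LipschitzWith 1 f)
    (hu : ‖u‖ = 1) {t : ℝ} (ht0 : 0 < t) (ht : f (x + t • u) = f x + t) {w : E}
    (hw : f (x + t • u + w) = f (x + t • u) + ‖w‖) :
    f (x + (t + ‖w‖) • u) = f x + (t + ‖w‖) := by
  have htu : ‖t • u‖ = t := norm_smul_of_norm_eq_one hu ht0.le
  have hlip := hf.sub_le_norm_sub (x + t • u + w) x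
  rw [add_assoc, add_sub_cancel_left, ← add_assoc, hw, ht] at hlip
  have hray : SameRay ℝ (t • u) w :=
    sameRay_iff_norm_add.2 (le_antisymm (norm_add_le _ _) (by linarith))
  have hw_eq : w = ‖w‖ • u := by
    have := hray.norm_smul_eq
    rw [htu, smul_comm] at this
    exact smul_right_injective E ht0.ne' this
  rw [add_smul, ← add_assoc, ← hw_eq, hw, ht, add_assoc]

theorem LipschitzWith.exists_unit_speed_ray [StrictConvexSpace ℝ E] (hf : LipschitzWith 1 f)
    (hhor : ∀ x : E, ∃ w : E, w ≠ 0 ∧ f (x + w) = f x + ‖w‖) (x : E) :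
    ∃ u : E, ‖u‖ = 1 ∧ ∀ t : ℝ, 0 ≤ t → f (x + t • u) = f x + t := by
  obtain ⟨w₀, hw₀, hfw₀⟩ := hhor x
  have hw₀pos : 0 < ‖w₀‖ := norm_pos_iff.2 hw₀
  set u := ‖w₀‖⁻¹ • w₀
  have hu : ‖u‖ = 1 := norm_smul_inv_norm hw₀
  refine ⟨u, hu, ?_⟩
  set S : Set ℝ := {t | 0 ≤ t ∧ f (x + t • u) = f x + t}
  have hw₀S : ‖w₀‖ ∈ S := ⟨hw₀pos.le, by rwa [smul_inv_smul₀ hw₀pos.ne']⟩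
  have hS : ¬BddAbove S := by
    intro hbdd
    have hS_closed : IsClosed S := by
      have hcont : Continuous fun t : ℝ => f (x + t • u) := hf.continuous.comp (by fun_prop)
      exact (isClosed_le continuous_const continuous_id).inter
        (isClosed_eq hcont (continuous_const.add continuous_id))
    set T := sSup S
    have hTS : T ∈ S := hS_closed.csSup_mem ⟨_, hw₀S⟩ hbdd
    have hTpos : 0 < T := hw₀pos.trans_le (le_csSup hbdd hw₀S)
    obtain ⟨w, hw, hfw⟩ := hhor (x + T • u)
    have hext : T + ‖w‖ ∈ S :=
      ⟨by positivity, hf.apply_add_smul_extend hu hTpos hTS.2 hfw⟩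
    linarith [le_csSup hbdd hext, norm_pos_iff.2 hw]
  intro t ht
  obtain ⟨s, hsS, hts⟩ := not_bddAbove_iff.1 hS t
  exact hf.apply_add_smul_of_le hu hsS.2 ht hts.le

end Ray

section Support

variable {E : Type*} [NormedAddCommGroup E] [InnerProductSpace ℝ E] {f : E → ℝ} {x u : E}

/-- With `t = a + ⟪u, v⟫`, one has `‖t • u - v‖² = a² + (‖v‖² - ⟪u, v⟫²)`, and
`√(a² + b) ≤ a + b / (2 a)`. -/
theorem norm_add_inner_smul_sub_le (hu : ‖u‖ = 1) (v : E) {a : ℝ} (ha : 0 < a) :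
    ‖(a + ⟪u, v⟫) • u - v‖ ≤ a + (‖v‖ ^ 2 - ⟪u, v⟫ ^ 2) / (2 * a) := by
  set b := ‖v‖ ^ 2 - ⟪u, v⟫ ^ 2
  have hb : 0 ≤ b := by
    have := abs_real_inner_le_norm u v
    rw [hu, one_mul] at this
    nlinarith [abs_nonneg ⟪u, v⟫, sq_abs ⟪u, v⟫]
  have hsq : ‖(a + ⟪u, v⟫) • u - v‖ ^ 2 = a ^ 2 + b := by
    rw [norm_sub_sq_real, real_inner_smul_left, norm_smul, hu, Real.norm_eq_abs, mul_one, sq_abs]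
    ring
  refine (pow_le_pow_iff_left₀ (norm_nonneg _) (by positivity) two_ne_zero).1 ?_
  rw [hsq]
  have : 2 * a * (b / (2 * a)) = b := by field_simp
  nlinarith [sq_nonneg (b / (2 * a))]

theorem LipschitzWith.inner_le_of_unit_speed_ray (hf : LipschitzWith 1 f) (hu : ‖u‖ = 1)
    (hray : ∀ t : ℝ, 0 ≤ t → f (x + t • u) = f x + t) (y : E) :
    f x + ⟪u, y - x⟫ ≤ f y := by
  set v := y - x
  set b := ‖v‖ ^ 2 - ⟪u, v⟫ ^ 2
  have hlim : Tendsto (fun a : ℝ => f x + ⟪u, v⟫ - b / (2 * a)) atTop (𝓝 (f x + ⟪u, v⟫)) := by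
    have : Tendsto (fun a : ℝ => b / (2 * a)) atTop (𝓝 0) :=
      tendsto_const_nhds.div_atTop (tendsto_id.const_mul_atTop two_pos)
    simpa using tendsto_const_nhds.sub this
  refine le_of_tendsto hlim ?_
  filter_upwards [eventually_gt_atTop 0, eventually_ge_atTop (-⟪u, v⟫)] with a ha hav
  have hlip := hf.sub_le_norm_sub (x + (a + ⟪u, v⟫) • u) y
  rw [hray _ (by linarith), show x + (a + ⟪u, v⟫) • u - y = (a + ⟪u, v⟫) • u - v by
    simp only [v]; abel] at hlip
  linarith [norm_add_inner_smul_sub_le hu v ha]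

end Support

theorem stmt_9 (n : ℕ) (f : EuclideanSpace ℝ (Fin n) → ℝ)
    (hlip : LipschitzWith 1 f)
    (hhor : ∀ x : EuclideanSpace ℝ (Fin n),
      ∃ w : EuclideanSpace ℝ (Fin n), w ≠ 0 ∧ f (x + w) = f x + ‖w‖) :
    ConvexOn ℝ Set.univ f := by
  refine convexOn_of_forall_exists_linear_minorant convex_univ fun x _ => ?_
  obtain ⟨u, hu, hray⟩ := hlip.exists_unit_speed_ray hhor x
  exact ⟨innerₛₗ ℝ u, fun y _ => hlip.inner_le_of_unit_speed_ray hu hray y⟩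
end

section
/- Let f : ℝⁿ → ℝ be a convex 1-Lipschitz function, p ∈ ℝⁿ, and v ∈ ℝⁿ a unit vector such that f(p + v) = f(p) + 1. Then f(p + tv) = f(p) + t for all t ≥ 0. -/
/-!
Restrict `f` to the ray `t ↦ p + t • v`. The Lipschitz bound caps every slope of the restriction
by `‖v‖`, and the hypothesis says the slope on `[0, 1]` attains this cap. Below `1` the two
Lipschitz bounds on `[0, t]` and `[t, 1]` must then both be equalities; beyond `1` convexity makes
slopes increase, so the slope on `[1, t]` is squeezed to `‖v‖` as well.
-/

open Set

theorem ConvexOn.eq_add_mul_sub_of_slope_le {φ : ℝ → ℝ} {a b c : ℝ} (hφ : ConvexOn ℝ (Ici a) φ)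
    (hslope : ∀ r s, a ≤ r → r ≤ s → φ s - φ r ≤ c * (s - r)) (hab : a < b)
    (hb : φ b = φ a + c * (b - a)) {t : ℝ} (ht : a ≤ t) : φ t = φ a + c * (t - a) := by
  have hupper := hslope a t le_rfl ht
  rcases le_or_gt t b with htb | hbt
  · have := hslope t b ht htb
    linarith
  · have hmono := hφ.slope_mono_adjacent (mem_Ici.2 le_rfl) (mem_Ici.2 ht) hab hbt
    rw [hb, add_sub_cancel_left, mul_div_cancel_right₀ _ (sub_pos.2 hab).ne',
      le_div_iff₀ (sub_pos.2 hbt)] at hmono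
    linarith

theorem LipschitzWith.apply_add_smul_sub_le {E : Type*} [SeminormedAddCommGroup E]
    [NormedSpace ℝ E] {f : E → ℝ} (hf : LipschitzWith 1 f) (p v : E) {r s : ℝ} (hrs : r ≤ s) :
    f (p + s • v) - f (p + r • v) ≤ ‖v‖ * (s - r) := by
  have := hf.le_add_mul (p + s • v) (p + r • v)
  rw [NNReal.coe_one, one_mul, dist_eq_norm, add_sub_add_left_eq_sub, ← sub_smul, norm_smul,
    Real.norm_of_nonneg (sub_nonneg.2 hrs)] at this
  linarith

theorem ConvexOn.comp_add_smul {E : Type*} [AddCommGroup E] [Module ℝ E] {f : E → ℝ}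
    (hf : ConvexOn ℝ univ f) (p v : E) : ConvexOn ℝ univ fun t : ℝ ↦ f (p + t • v) := by
  have := hf.comp_affineMap (AffineMap.lineMap p (p + v))
  simpa [Function.comp_def, AffineMap.lineMap_apply_module', add_comm p] using this

theorem ConvexOn.apply_add_smul_eq_of_lipschitzWith_one {E : Type*} [SeminormedAddCommGroup E]
    [NormedSpace ℝ E] {f : E → ℝ} (hconv : ConvexOn ℝ univ f) (hlip : LipschitzWith 1 f)
    {p v : E} (h : f (p + v) = f p + ‖v‖) {t : ℝ} (ht : 0 ≤ t) :
    f (p + t • v) = f p + ‖v‖ * t := by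
  have hray : ConvexOn ℝ (Ici 0) fun t : ℝ ↦ f (p + t • v) :=
    (hconv.comp_add_smul p v).subset (subset_univ _) (convex_Ici 0)
  simpa using hray.eq_add_mul_sub_of_slope_le
    (fun r s _ hrs ↦ hlip.apply_add_smul_sub_le p v hrs) zero_lt_one (by simpa using h) ht

theorem stmt_10 (n : ℕ) (f : EuclideanSpace ℝ (Fin n) → ℝ)
    (hconv : ConvexOn ℝ Set.univ f) (hlip : LipschitzWith 1 f)
    (p v : EuclideanSpace ℝ (Fin n)) (hv : ‖v‖ = 1)
    (h : f (p + v) = f p + 1) :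
    ∀ t : ℝ, 0 ≤ t → f (p + t • v) = f p + t := by
  intro t ht
  have := hconv.apply_add_smul_eq_of_lipschitzWith_one hlip (by rwa [hv]) ht
  rwa [hv, one_mul] at this
end

section
/- Suppose v₀, u : ℝⁿ → ℝ are continuous, and for every x ∈ ℝⁿ there exists a unit vector ξ such that v₀(x + tξ) = v₀(x) + t for all small t ≥ 0, while u is strictly 1-Lipschitz (|u(x) − u(y)| < |x − y| for x ≠ y). Then the function u − v₀ has no local minimum. -/
open Filter Topology

/-- Along the ray `x + t • ξ`, the rise of `v` matches the distance travelled, which the strictly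
`1`-Lipschitz `u` cannot keep up with; so `u - v` drops strictly below its value at `x`. -/
theorem not_isLocalMin_sub_of_unit_rate_ray {E : Type*} [NormedAddCommGroup E] [NormedSpace ℝ E]
    {u v : E → ℝ} {x ξ : E} (hξ : ‖ξ‖ = 1)
    (hv : ∀ᶠ t in 𝓝[>] (0 : ℝ), v x + t ≤ v (x + t • ξ))
    (hu : ∀ y, y ≠ x → |u y - u x| < ‖y - x‖) :
    ¬ IsLocalMin (fun y => u y - v y) x := by
  intro hmin
  have hray : Tendsto (fun t : ℝ => x + t • ξ) (𝓝[>] 0) (𝓝 x) :=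
    ((continuous_const.add (continuous_id.smul continuous_const)).tendsto' 0 x
      (by simp)).mono_left nhdsWithin_le_nhds
  obtain ⟨t, hmin_t, hv_t, ht : 0 < t⟩ :=
    ((hray.eventually hmin).and (hv.and self_mem_nhdsWithin)).exists
  have hdist : ‖(x + t • ξ) - x‖ = t := by
    rw [add_sub_cancel_left, norm_smul, hξ, mul_one, Real.norm_of_nonneg ht.le]
  have hne : x + t • ξ ≠ x := by
    intro h
    rw [h, sub_self, norm_zero] at hdist
    exact ht.ne hdist
  have hlip := (abs_lt.mp (hu _ hne)).2
  simp only at hmin_t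
  linarith

theorem stmt_18_general (n : ℕ) (v₀ u : EuclideanSpace ℝ (Fin n) → ℝ)
    (hray : ∀ x : EuclideanSpace ℝ (Fin n),
      ∃ ξ : EuclideanSpace ℝ (Fin n), ‖ξ‖ = 1 ∧
        ∃ ε > (0 : ℝ), ∀ t ∈ Set.Icc (0 : ℝ) ε, v₀ (x + t • ξ) = v₀ x + t)
    (hu : ∀ x y, x ≠ y → |u x - u y| < ‖x - y‖) :
    ∀ x, ¬ IsLocalMin (fun y => u y - v₀ y) x := by
  intro x
  obtain ⟨ξ, hξ, ε, hε, hv⟩ := hray x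
  refine not_isLocalMin_sub_of_unit_rate_ray hξ ?_ (fun y hy => hu y x hy)
  filter_upwards [Ioc_mem_nhdsGT hε] with t ht
  exact (hv t (Set.Ioc_subset_Icc_self ht)).ge

theorem stmt_18 (n : ℕ) (v₀ u : EuclideanSpace ℝ (Fin n) → ℝ)
    (hv₀cont : Continuous v₀) (hucont : Continuous u)
    (hray : ∀ x : EuclideanSpace ℝ (Fin n),
      ∃ ξ : EuclideanSpace ℝ (Fin n), ‖ξ‖ = 1 ∧
        ∃ ε > (0 : ℝ), ∀ t ∈ Set.Icc (0 : ℝ) ε, v₀ (x + t • ξ) = v₀ x + t)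
    (hu : ∀ x y, x ≠ y → |u x - u y| < ‖x - y‖) :
    ∀ x, ¬ IsLocalMin (fun y => u y - v₀ y) x :=
  stmt_18_general n v₀ u hray hu
end
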